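/- Let 𝔤 be a finite-dimensional real Lie algebra with Killing form B. Let 𝔩 ⊆ 𝔤 be a Lie subalgebra on which B is negative definite, let 𝔭 be the B-orthogonal complement of 𝔩 in 𝔤, and assume B is positive definite on 𝔭, [𝔩,𝔭] ⊆ 𝔭 and [𝔭,𝔭] ⊆ 𝔩. Let 𝔨 ⊆ 𝔩 be a Lie subalgebra with [𝔣,𝔣] ⊆ 𝔨, where 𝔣 is the B-orthogonal complement of 𝔨 in 𝔩, and set 𝔪 = 𝔣 ⊕ 𝔭. Then the bilinear form on 𝔪 defined by ⟨x,y⟩ = −2B(x_𝔣,y_𝔣) + B(x_𝔭,y_𝔭) (where x_𝔣, x_𝔭 denote the components of x in 𝔣 and 𝔭) is an inner product which is ad(𝔨)-invariant (⟨[k,x],y⟩ + ⟨x,[k,y]⟩ = 0 for all k ∈ 𝔨, x,y ∈ 𝔪) and satisfies the cyclic condition. -/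
import Mathlib


/-- The bilinear form `⟨x,y⟩ = -2·B(x_𝔣, y_𝔣) + B(x_𝔭, y_𝔭)`, where `x_𝔣 = πf x`
and `x_𝔭 = πp x` are the components of `x` in `𝔣` and `𝔭`, and `B` is the
Killing form. -/
noncomputable def adaptedForm {L : Type*} [LieRing L] [LieAlgebra ℝ L]
    (πf πp : L →ₗ[ℝ] L) (x y : L) : ℝ :=
  -2 * killingForm ℝ L (πf x) (πf y) + killingForm ℝ L (πp x) (πp y)

/-- with a Cartan decomposition `𝔤 = 𝔩 ⊕ 𝔭`, a subalgebra `𝔨 ⊆ 𝔩`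
with `B`-orthogonal complement `𝔣` in `𝔩` satisfying `[𝔣,𝔣] ⊆ 𝔨`, and
`𝔪 = 𝔣 ⊕ 𝔭`, the form `⟨x,y⟩ = −2B(x_𝔣,y_𝔣) + B(x_𝔭,y_𝔭)` on `𝔪` is an
`ad(𝔨)`-invariant inner product satisfying the cyclic condition. -/
theorem stmt_3
    (L : Type*) [LieRing L] [LieAlgebra ℝ L] [FiniteDimensional ℝ L]
    (l : LieSubalgebra ℝ L)
    (hlneg : ∀ x ∈ l, x ≠ 0 → killingForm ℝ L x x < 0)
    (p : Submodule ℝ L)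
    (hp : ∀ y : L, y ∈ p ↔ ∀ x ∈ l, killingForm ℝ L x y = 0)
    (hppos : ∀ x ∈ p, x ≠ 0 → 0 < killingForm ℝ L x x)
    (hlp : ∀ x ∈ l, ∀ y ∈ p, ⁅x, y⁆ ∈ p)
    (hpp : ∀ x ∈ p, ∀ y ∈ p, ⁅x, y⁆ ∈ l)
    (k : LieSubalgebra ℝ L) (hkl : k ≤ l)
    (f : Submodule ℝ L)
    (hf : ∀ y : L, y ∈ f ↔ (y ∈ l ∧ ∀ x ∈ k, killingForm ℝ L x y = 0))
    (hff : ∀ x ∈ f, ∀ y ∈ f, ⁅x, y⁆ ∈ k)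
    (hcompl : IsCompl k.toSubmodule (f ⊔ p))
    (πf πp : L →ₗ[ℝ] L)
    (hπf_mem : ∀ x : L, πf x ∈ f) (hπp_mem : ∀ x : L, πp x ∈ p)
    (hπf_f : ∀ x ∈ f, πf x = x) (hπf_p : ∀ x ∈ p, πf x = 0)
    (hπp_p : ∀ x ∈ p, πp x = x) (hπp_f : ∀ x ∈ f, πp x = 0) :
    (∀ x ∈ f ⊔ p, ∀ y ∈ f ⊔ p, adaptedForm πf πp x y = adaptedForm πf πp y x)
    ∧ (∀ x ∈ f ⊔ p, x ≠ 0 → 0 < adaptedForm πf πp x x)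
    ∧ (∀ c ∈ k, ∀ x ∈ f ⊔ p, ∀ y ∈ f ⊔ p,
        adaptedForm πf πp ⁅c, x⁆ y + adaptedForm πf πp x ⁅c, y⁆ = 0)
    ∧ (∀ X ∈ f ⊔ p, ∀ Y ∈ f ⊔ p, ∀ Z ∈ f ⊔ p,
        adaptedForm πf πp
          ((Submodule.linearProjOfIsCompl (f ⊔ p) k.toSubmodule hcompl.symm ⁅X, Y⁆ : L)) Z
        + adaptedForm πf πp
          ((Submodule.linearProjOfIsCompl (f ⊔ p) k.toSubmodule hcompl.symm ⁅Y, Z⁆ : L)) X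
        + adaptedForm πf πp
          ((Submodule.linearProjOfIsCompl (f ⊔ p) k.toSubmodule hcompl.symm ⁅Z, X⁆ : L)) Y
        = 0) := by
  have Bcomm : ∀ x y : L, killingForm ℝ L x y = killingForm ℝ L y x :=
    LieModule.traceForm_comm ℝ L L
  have Binv : ∀ x y z : L, killingForm ℝ L ⁅x, y⁆ z = killingForm ℝ L x ⁅y, z⁆ :=
    LieModule.traceForm_apply_lie_apply ℝ L L
  have hlp0 : ∀ x ∈ l, ∀ y ∈ p, killingForm ℝ L x y = 0 :=
    fun x hx y hy => (hp y).mp hy x hx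
  have hkf0 : ∀ x ∈ k, ∀ y ∈ f, killingForm ℝ L x y = 0 :=
    fun x hx y hy => ((hf y).mp hy).2 x hx
  have hfl : ∀ y ∈ f, y ∈ l := fun y hy => ((hf y).mp hy).1
  -- the value of the form on a sum decomposition
  have hval : ∀ a ∈ f, ∀ u ∈ p, ∀ b ∈ f, ∀ v ∈ p,
      adaptedForm πf πp (a + u) (b + v)
        = -2 * killingForm ℝ L a b + killingForm ℝ L u v := by
    intro a ha u hu b hb v hv
    simp only [adaptedForm, map_add, hπf_f a ha, hπf_f b hb, hπf_p u hu, hπf_p v hv,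
      hπp_p u hu, hπp_p v hv, hπp_f a ha, hπp_f b hb, add_zero, zero_add]
  refine ⟨?_, ?_, ?_, ?_⟩
  · -- symmetry
    intro x _ y _
    simp only [adaptedForm]
    rw [Bcomm (πf x) (πf y), Bcomm (πp x) (πp y)]
  · -- positive definiteness
    intro x hx hx0
    obtain ⟨a, ha, u, hu, rfl⟩ := Submodule.mem_sup.mp hx
    rw [hval a ha u hu a ha u hu]
    rcases eq_or_ne a 0 with rfl | ha0
    · have hu0 : u ≠ 0 := by simpa using hx0
      have := hppos u hu hu0
      simp only [map_zero, LinearMap.zero_apply]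
      linarith
    · have h1 := hlneg a (hfl a ha) ha0
      rcases eq_or_ne u 0 with rfl | hu0
      · simp only [map_zero, LinearMap.map_zero]
        linarith
      · have h2 := hppos u hu hu0
        linarith
  · -- ad(k)-invariance
    intro c hc x hx y hy
    obtain ⟨a, ha, u, hu, rfl⟩ := Submodule.mem_sup.mp hx
    obtain ⟨b, hb, v, hv, rfl⟩ := Submodule.mem_sup.mp hy
    have hkf : ∀ z ∈ f, ⁅c, z⁆ ∈ f := by
      intro z hz
      rw [hf]
      refine ⟨l.lie_mem (hkl hc) (hfl z hz), fun x' hx' => ?_⟩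
      have : killingForm ℝ L ⁅x', c⁆ z = killingForm ℝ L x' ⁅c, z⁆ := Binv x' c z
      rw [← this]
      exact hkf0 _ (k.lie_mem hx' hc) z hz
    have hca : ⁅c, a⁆ ∈ f := hkf a ha
    have hcb : ⁅c, b⁆ ∈ f := hkf b hb
    have hcu : ⁅c, u⁆ ∈ p := hlp c (hkl hc) u hu
    have hcv : ⁅c, v⁆ ∈ p := hlp c (hkl hc) v hv
    rw [lie_add, lie_add, hval _ hca _ hcu b hb v hv, hval a ha u hu _ hcb _ hcv]
    have e1 : killingForm ℝ L ⁅c, a⁆ b = - killingForm ℝ L a ⁅c, b⁆ :=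
      LieModule.traceForm_apply_lie_apply' ℝ L L c a b
    have e2 : killingForm ℝ L ⁅c, u⁆ v = - killingForm ℝ L u ⁅c, v⁆ :=
      LieModule.traceForm_apply_lie_apply' ℝ L L c u v
    rw [e1, e2]; ring
  · -- cyclic condition
    intro X hX Y hY Z hZ
    set P := Submodule.linearProjOfIsCompl (f ⊔ p) k.toSubmodule hcompl.symm with hP
    -- key: ⟨(P W), c + w⟩ = -2 B(W, c) + B(W, w) for c ∈ f, w ∈ p
    have key : ∀ W : L, ∀ c ∈ f, ∀ w ∈ p,
        adaptedForm πf πp (P W : L) (c + w)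
          = -2 * killingForm ℝ L W c + killingForm ℝ L W w := by
      intro W c hc w hw
      obtain ⟨a', ha', b', hb', hab⟩ := Submodule.mem_sup.mp (P W).2
      have hκmem : (k.toSubmodule.linearProjOfIsCompl (f ⊔ p) hcompl.symm.symm W : L)
          ∈ k.toSubmodule :=
        (k.toSubmodule.linearProjOfIsCompl (f ⊔ p) hcompl.symm.symm W).2
      have hWeq : a' + b' +
          (k.toSubmodule.linearProjOfIsCompl (f ⊔ p) hcompl.symm.symm W : L) = W := by
        rw [hab]
        exact Submodule.projection_add_projection_eq_self hcompl.symm W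
      set κ := (k.toSubmodule.linearProjOfIsCompl (f ⊔ p) hcompl.symm.symm W : L)
      have hBc : killingForm ℝ L W c = killingForm ℝ L a' c := by
        rw [← hWeq]
        simp only [map_add, LinearMap.add_apply]
        rw [Bcomm b' c, hlp0 c (hfl c hc) b' hb', hkf0 κ hκmem c hc]
        ring
      have hBw : killingForm ℝ L W w = killingForm ℝ L b' w := by
        rw [← hWeq]
        simp only [map_add, LinearMap.add_apply]
        rw [hlp0 a' (hfl a' ha') w hw, hlp0 κ (hkl hκmem) w hw]
        ring
      rw [← hab, hval a' ha' b' hb' c hc w hw, hBc, hBw]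
    obtain ⟨a, ha, u, hu, rfl⟩ := Submodule.mem_sup.mp hX
    obtain ⟨b, hb, v, hv, rfl⟩ := Submodule.mem_sup.mp hY
    obtain ⟨c, hc, w, hw, rfl⟩ := Submodule.mem_sup.mp hZ
    rw [key ⁅a + u, b + v⁆ c hc w hw, key ⁅b + v, c + w⁆ a ha u hu,
      key ⁅c + w, a + u⁆ b hb v hv]
    -- expand all brackets
    simp only [lie_add, add_lie, map_add, LinearMap.add_apply]
    -- orthogonality vanishing facts
    have zkf : ∀ x ∈ f, ∀ y ∈ f, ∀ z ∈ f, killingForm ℝ L ⁅x, y⁆ z = 0 :=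
      fun x hx y hy z hz => hkf0 _ (hff x hx y hy) z hz
    have zfp : ∀ x ∈ l, ∀ y ∈ p, killingForm ℝ L x y = 0 := hlp0
    have zpf : ∀ x ∈ p, ∀ y ∈ l, killingForm ℝ L x y = 0 := by
      intro x hx y hy; rw [Bcomm]; exact hlp0 y hy x hx
    -- bracket membership facts
    have mfp : ∀ x ∈ f, ∀ y ∈ p, ⁅x, y⁆ ∈ p := fun x hx y hy => hlp x (hfl x hx) y hy
    have mpf : ∀ x ∈ p, ∀ y ∈ f, ⁅x, y⁆ ∈ p := by
      intro x hx y hy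
      rw [← lie_skew]
      exact p.neg_mem (mfp y hy x hx)
    -- invariance relations
    have r1 : killingForm ℝ L ⁅a, v⁆ w = killingForm ℝ L ⁅v, w⁆ a := by
      rw [Binv a v w, Bcomm]
    have r2 : killingForm ℝ L ⁅u, b⁆ w = killingForm ℝ L ⁅w, u⁆ b := by
      rw [LieModule.traceForm_apply_lie_apply' ℝ L L u b w, Binv, Bcomm, ← lie_skew u w,
        map_neg, LinearMap.neg_apply, neg_neg]
      exact Binv w u b
    have r3 : killingForm ℝ L ⁅b, w⁆ u = killingForm ℝ L ⁅w, u⁆ b := by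
      rw [Binv b w u, Bcomm]
    have r4 : killingForm ℝ L ⁅v, c⁆ u = killingForm ℝ L ⁅u, v⁆ c := by
      rw [LieModule.traceForm_apply_lie_apply' ℝ L L v c u, Binv, Bcomm, ← lie_skew v u,
        map_neg, LinearMap.neg_apply, neg_neg]
      exact Binv u v c
    have r5 : killingForm ℝ L ⁅c, u⁆ v = killingForm ℝ L ⁅u, v⁆ c := by
      rw [Binv c u v, Bcomm]
    have r6 : killingForm ℝ L ⁅w, a⁆ v = killingForm ℝ L ⁅v, w⁆ a := by
      rw [LieModule.traceForm_apply_lie_apply' ℝ L L w a v, Binv, Bcomm, ← lie_skew w v,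
        map_neg, LinearMap.neg_apply, neg_neg]
      exact Binv v w a
    -- vanishing terms
    have z1 : killingForm ℝ L ⁅a, b⁆ c = 0 := zkf a ha b hb c hc
    have z2 : killingForm ℝ L ⁅b, c⁆ a = 0 := zkf b hb c hc a ha
    have z3 : killingForm ℝ L ⁅c, a⁆ b = 0 := zkf c hc a ha b hb
    have z4 : killingForm ℝ L ⁅a, v⁆ c = 0 := zpf _ (mfp a ha v hv) c (hfl c hc)
    have z5 : killingForm ℝ L ⁅u, b⁆ c = 0 := zpf _ (mpf u hu b hb) c (hfl c hc)
    have z6 : killingForm ℝ L ⁅b, w⁆ a = 0 := zpf _ (mfp b hb w hw) a (hfl a ha)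
    have z7 : killingForm ℝ L ⁅v, c⁆ a = 0 := zpf _ (mpf v hv c hc) a (hfl a ha)
    have z8 : killingForm ℝ L ⁅c, u⁆ b = 0 := zpf _ (mfp c hc u hu) b (hfl b hb)
    have z9 : killingForm ℝ L ⁅w, a⁆ b = 0 := zpf _ (mpf w hw a ha) b (hfl b hb)
    have z10 : killingForm ℝ L ⁅a, b⁆ w = 0 := zfp _ (hkl (hff a ha b hb)) w hw
    have z11 : killingForm ℝ L ⁅b, c⁆ u = 0 := zfp _ (hkl (hff b hb c hc)) u hu
    have z12 : killingForm ℝ L ⁅c, a⁆ v = 0 := zfp _ (hkl (hff c hc a ha)) v hv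
    have z13 : killingForm ℝ L ⁅u, v⁆ w = 0 := zfp _ (hpp u hu v hv) w hw
    have z14 : killingForm ℝ L ⁅v, w⁆ u = 0 := zfp _ (hpp v hv w hw) u hu
    have z15 : killingForm ℝ L ⁅w, u⁆ v = 0 := zfp _ (hpp w hw u hu) v hv
    linarith
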